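/- Let 1 < p < ∞, 1 ≤ q ≤ s, and let w be a weight on ℝⁿ. Then w ∈ A_{s/q} ∩ RH_{(p/s)'} if and only if w^{(p/s)'} ∈ A_{(p/s)'(s/q − 1) + 1}, where for 1 < r < ∞, [w]_{A_r} = sup_Q ⟨w⟩_{Q,1} ⟨w^{1−r'}⟩_{Q,1}^{r−1} < ∞ defines the Muckenhoupt class and [w]_{RH_r} = sup_Q ⟨w⟩_{Q,1}^{−1} ⟨w⟩_{Q,r} < ∞ defines the reverse Hölder class (suprema over cubes Q, ⟨w⟩_{Q,r} := (|Q|^{-1}∫_Q w^r)^{1/r}). -/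

import Mathlib

/-
Both sides are equivalent to the single condition `sup_Q ⟨w⟩_{Q,r} ⟨w^{1-t'}⟩_{Q,1}^{t-1} < ∞`,
where `r = (p/s)'` and `t = s/q`. For `w^r ∈ A_{r(t-1)+1}` this is an identity: on every cube the
`A_{r(t-1)+1}` product of `w^r` is the `r`-th power of that product. For `A_t ∩ RH_r`, one direction
multiplies the two constants; the converse bounds the `A_t` product by Jensen,
`⟨w⟩_{Q,1} ≤ ⟨w⟩_{Q,r}`, and the `RH_r` quotient by Hölder, `1 ≤ ⟨w⟩_{Q,1} ⟨w^{1-t'}⟩_{Q,1}^{t-1}`.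
Averages over a cube are integrals against the conditional measure `volume[|Q]`, so both
inequalities are facts about probability measures.
-/

open MeasureTheory Set
open scoped ENNReal

/-- The half-open cube with corner `c` and side length `l` in `ℝⁿ`. -/
def wCube (n : ℕ) (c : Fin n → ℝ) (l : ℝ) : Set (Fin n → ℝ) :=
  Set.univ.pi fun i => Set.Ico (c i) (c i + l)

/-- `⟨w⟩_{Q,r} = (|Q|⁻¹ ∫_Q w^r)^{1/r}` over the cube with corner `c`, side `l`. -/
noncomputable def wAvg (n : ℕ) (w : (Fin n → ℝ) → ℝ≥0∞) (r : ℝ)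
    (c : Fin n → ℝ) (l : ℝ) : ℝ≥0∞ :=
  ((volume (wCube n c l))⁻¹ * ∫⁻ x in wCube n c l, (w x) ^ r) ^ (1/r)

/-- The Muckenhoupt condition `w ∈ A_r` (for `1 < r`):
`sup_Q ⟨w⟩_{Q,1} ⟨w^{1−r'}⟩_{Q,1}^{r−1} < ∞` with `r' = r/(r-1)`. -/
def MuckenhouptA (n : ℕ) (r : ℝ) (w : (Fin n → ℝ) → ℝ≥0∞) : Prop :=
  ∃ C : ℝ≥0∞, C ≠ ⊤ ∧ ∀ (c : Fin n → ℝ) (l : ℝ), 0 < l →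
    wAvg n w 1 c l * (wAvg n (fun x => (w x) ^ (1 - r/(r-1))) 1 c l) ^ (r - 1) ≤ C

/-- The reverse Hölder condition `w ∈ RH_r`: `sup_Q ⟨w⟩_{Q,1}⁻¹ ⟨w⟩_{Q,r} < ∞`,
i.e. `⟨w⟩_{Q,r} ≤ C ⟨w⟩_{Q,1}` uniformly over cubes. -/
def ReverseHolder (n : ℕ) (r : ℝ) (w : (Fin n → ℝ) → ℝ≥0∞) : Prop :=
  ∃ C : ℝ≥0∞, C ≠ ⊤ ∧ ∀ (c : Fin n → ℝ) (l : ℝ), 0 < l →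
    wAvg n w r c l ≤ C * wAvg n w 1 c l

open ProbabilityTheory

section ProbabilityMeasure

variable {α : Type*} [MeasurableSpace α] {μ : Measure α} [IsProbabilityMeasure μ]

theorem one_le_lintegral_mul_lintegral_rpow_one_sub_conj_rpow {f : α → ℝ≥0∞}
    (hf : AEMeasurable f μ) (hf_pos : ∀ᵐ x ∂μ, 0 < f x ∧ f x < ⊤) {t : ℝ} (ht : 1 < t) :
    1 ≤ (∫⁻ x, f x ∂μ) * (∫⁻ x, f x ^ (1 - t / (t - 1)) ∂μ) ^ (t - 1) := by
  have ht0 : 0 < t := zero_lt_one.trans ht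
  have hconj : t.HolderConjugate (t / (t - 1)) := .conjExponent ht
  have holder := ENNReal.lintegral_mul_le_Lp_mul_Lq μ hconj
    (hf.pow_const (1 / t)) (hf.pow_const (-(1 / t)))
  have h_one : ∀ᵐ x ∂μ, ((fun x ↦ f x ^ (1 / t)) * fun x ↦ f x ^ (-(1 / t))) x = 1 := by
    filter_upwards [hf_pos] with x hx
    simp [← ENNReal.rpow_add _ _ hx.1.ne' hx.2.ne]
  have h_pow_t (x : α) : (f x ^ (1 / t)) ^ t = f x := by
    rw [← ENNReal.rpow_mul, one_div_mul_cancel ht0.ne', ENNReal.rpow_one]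
  have h_pow_conj (x : α) : (f x ^ (-(1 / t))) ^ (t / (t - 1)) = f x ^ (1 - t / (t - 1)) := by
    rw [← ENNReal.rpow_mul]
    congr 1
    field_simp [(sub_pos.2 ht).ne']
    ring
  rw [lintegral_congr_ae h_one, lintegral_one, measure_univ] at holder
  simp only [h_pow_t, h_pow_conj] at holder
  calc (1 : ℝ≥0∞) ≤ _ := ENNReal.one_le_rpow holder ht0
    _ = _ := by
      rw [ENNReal.mul_rpow_of_nonneg _ _ ht0.le, ← ENNReal.rpow_mul, ← ENNReal.rpow_mul,
        one_div_mul_cancel ht0.ne', ENNReal.rpow_one]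
      congr 2
      field_simp

end ProbabilityMeasure

section Cube

variable {n : ℕ} {w : (Fin n → ℝ) → ℝ≥0∞} {c : Fin n → ℝ} {l : ℝ}

theorem volume_wCube (n : ℕ) (c : Fin n → ℝ) (l : ℝ) :
    volume (wCube n c l) = ENNReal.ofReal l ^ n := by
  simp [wCube, volume_pi_pi, Real.volume_Ico]

theorem isProbabilityMeasure_cond_wCube (hl : 0 < l) :
    IsProbabilityMeasure (volume[|wCube n c l]) :=
  cond_isProbabilityMeasure_of_finite (by simp [volume_wCube, hl])
    (by simp [volume_wCube])

theorem wAvg_eq_lintegral_cond (r : ℝ) :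
    wAvg n w r c l = (∫⁻ x, w x ^ r ∂volume[|wCube n c l]) ^ (1 / r) := by
  rw [wAvg, ProbabilityTheory.cond, lintegral_smul_measure, smul_eq_mul]

theorem wAvg_one_eq_lintegral_cond : wAvg n w 1 c l = ∫⁻ x, w x ∂volume[|wCube n c l] := by
  simp [wAvg_eq_lintegral_cond]

theorem wAvg_rpow_one {r : ℝ} (hr : r ≠ 0) :
    wAvg n (fun x ↦ w x ^ r) 1 c l = wAvg n w r c l ^ r := by
  rw [wAvg_one_eq_lintegral_cond, wAvg_eq_lintegral_cond, ← ENNReal.rpow_mul,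
    one_div_mul_cancel hr, ENNReal.rpow_one]

theorem wAvg_one_le_wAvg (hw : Measurable w) {r : ℝ} (hr : 1 ≤ r) (hl : 0 < l) :
    wAvg n w 1 c l ≤ wAvg n w r c l := by
  have := isProbabilityMeasure_cond_wCube (n := n) (c := c) hl
  simpa [eLpNorm', wAvg_eq_lintegral_cond] using
    eLpNorm'_le_eLpNorm'_of_exponent_le one_pos hr _ hw.aestronglyMeasurable

theorem one_le_wAvg_mul_wAvg_rpow_one_sub_conj (hwm : Measurable w)
    (hw : ∀ᵐ x ∂volume, 0 < w x ∧ w x < ⊤) {t : ℝ} (ht : 1 < t) (hl : 0 < l) :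
    1 ≤ wAvg n w 1 c l * (wAvg n (fun x ↦ w x ^ (1 - t / (t - 1))) 1 c l) ^ (t - 1) := by
  have := isProbabilityMeasure_cond_wCube (n := n) (c := c) hl
  simp only [wAvg_one_eq_lintegral_cond]
  exact one_le_lintegral_mul_lintegral_rpow_one_sub_conj_rpow hwm.aemeasurable
    (cond_absolutelyContinuous.ae_le hw) ht

end Cube

def MixedMuckenhoupt (n : ℕ) (r t : ℝ) (w : (Fin n → ℝ) → ℝ≥0∞) : Prop :=
  ∃ C : ℝ≥0∞, C ≠ ⊤ ∧ ∀ (c : Fin n → ℝ) (l : ℝ), 0 < l →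
    wAvg n w r c l * (wAvg n (fun x ↦ w x ^ (1 - t / (t - 1))) 1 c l) ^ (t - 1) ≤ C

section Muckenhoupt

variable {n : ℕ} {w : (Fin n → ℝ) → ℝ≥0∞} {r t : ℝ}

theorem wAvg_rpow_mul_wAvg_rpow_one_sub_conj (hr : 0 < r) (ht : 1 < t) (c : Fin n → ℝ) (l : ℝ) :
    wAvg n (fun x ↦ w x ^ r) 1 c l *
        (wAvg n (fun x ↦ (w x ^ r) ^ (1 - (r * (t - 1) + 1) / (r * (t - 1) + 1 - 1))) 1 c l) ^
          (r * (t - 1) + 1 - 1) =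
      (wAvg n w r c l * (wAvg n (fun x ↦ w x ^ (1 - t / (t - 1))) 1 c l) ^ (t - 1)) ^ r := by
  have h_exp : r * (1 - (r * (t - 1) + 1) / (r * (t - 1) + 1 - 1)) = 1 - t / (t - 1) := by
    have : t - 1 ≠ 0 := (sub_pos.2 ht).ne'
    rw [add_sub_cancel_right]
    field_simp
    ring
  simp only [← ENNReal.rpow_mul, h_exp]
  rw [wAvg_rpow_one hr.ne', ENNReal.mul_rpow_of_nonneg _ _ hr.le, ← ENNReal.rpow_mul,
    add_sub_cancel_right, mul_comm r]

theorem muckenhouptA_rpow_iff (hr : 0 < r) (ht : 1 < t) :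
    MuckenhouptA n (r * (t - 1) + 1) (fun x ↦ w x ^ r) ↔ MixedMuckenhoupt n r t w := by
  simp only [MuckenhouptA, MixedMuckenhoupt, wAvg_rpow_mul_wAvg_rpow_one_sub_conj hr ht]
  constructor
  · rintro ⟨C, hC, hbound⟩
    refine ⟨C ^ r⁻¹, ENNReal.rpow_ne_top_of_nonneg (inv_nonneg.2 hr.le) hC, fun c l hl ↦ ?_⟩
    exact (ENNReal.le_rpow_inv_iff hr).2 (hbound c l hl)
  · rintro ⟨C, hC, hbound⟩
    refine ⟨C ^ r, ENNReal.rpow_ne_top_of_nonneg hr.le hC, fun c l hl ↦ ?_⟩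
    exact ENNReal.rpow_le_rpow (hbound c l hl) hr.le

theorem muckenhouptA_and_reverseHolder_iff (hwm : Measurable w)
    (hw : ∀ᵐ x ∂volume, 0 < w x ∧ w x < ⊤) (hr : 1 ≤ r) (ht : 1 < t) :
    MuckenhouptA n t w ∧ ReverseHolder n r w ↔ MixedMuckenhoupt n r t w := by
  set σ := fun x ↦ w x ^ (1 - t / (t - 1))
  constructor
  · rintro ⟨⟨C₁, hC₁, hA⟩, ⟨C₂, hC₂, hRH⟩⟩
    refine ⟨C₂ * C₁, ENNReal.mul_ne_top hC₂ hC₁, fun c l hl ↦ ?_⟩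
    calc wAvg n w r c l * wAvg n σ 1 c l ^ (t - 1)
        ≤ C₂ * wAvg n w 1 c l * wAvg n σ 1 c l ^ (t - 1) := by gcongr; exact hRH c l hl
      _ = C₂ * (wAvg n w 1 c l * wAvg n σ 1 c l ^ (t - 1)) := mul_assoc _ _ _
      _ ≤ C₂ * C₁ := by gcongr; exact hA c l hl
  · rintro ⟨C, hC, hbound⟩
    refine ⟨⟨C, hC, fun c l hl ↦ ?_⟩, ⟨C, hC, fun c l hl ↦ ?_⟩⟩
    · calc wAvg n w 1 c l * wAvg n σ 1 c l ^ (t - 1)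
          ≤ wAvg n w r c l * wAvg n σ 1 c l ^ (t - 1) := by
            gcongr; exact wAvg_one_le_wAvg hwm hr hl
        _ ≤ C := hbound c l hl
    · calc wAvg n w r c l
          ≤ wAvg n w r c l * (wAvg n w 1 c l * wAvg n σ 1 c l ^ (t - 1)) :=
            le_mul_of_one_le_right' (one_le_wAvg_mul_wAvg_rpow_one_sub_conj hwm hw ht hl)
        _ = wAvg n w r c l * wAvg n σ 1 c l ^ (t - 1) * wAvg n w 1 c l := by ring
        _ ≤ C * wAvg n w 1 c l := by gcongr; exact hbound c l hl

end Muckenhoupt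

theorem stmt4_general (n : ℕ) (p q s : ℝ) (hq : 1 ≤ q)
    (hqs : q < s) (hsp : s < p)
    (w : (Fin n → ℝ) → ℝ≥0∞) (hwm : Measurable w)
    (hw : ∀ᵐ x ∂volume, 0 < w x ∧ w x < ⊤) :
    (MuckenhouptA n (s/q) w ∧ ReverseHolder n ((p/s)/((p/s) - 1)) w) ↔
      MuckenhouptA n (((p/s)/((p/s) - 1)) * (s/q - 1) + 1)
        (fun x => (w x) ^ ((p/s)/((p/s) - 1))) := by
  have hs : 0 < s := (zero_lt_one.trans_le hq).trans hqs
  have ht : 1 < s / q := (one_lt_div (zero_lt_one.trans_le hq)).2 hqs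
  have hr : 1 < (p / s) / ((p / s) - 1) :=
    (Real.HolderConjugate.conjExponent ((one_lt_div hs).2 hsp)).symm.lt
  rw [muckenhouptA_and_reverseHolder_iff hwm hw hr.le ht,
    muckenhouptA_rpow_iff (zero_lt_one.trans hr) ht]

/-- Characterization `w ∈ A_{s/q} ∩ RH_{(p/s)'} ↔ w^{(p/s)'} ∈ A_{(p/s)'(s/q−1)+1}`. -/
theorem stmt4 (n : ℕ) (hn : 1 ≤ n) (p q s : ℝ) (hp : 1 < p) (hq : 1 ≤ q)
    (hqs : q < s) (hsp : s < p)
    (w : (Fin n → ℝ) → ℝ≥0∞) (hwm : Measurable w)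
    (hw : ∀ᵐ x ∂volume, 0 < w x ∧ w x < ⊤) :
    (MuckenhouptA n (s/q) w ∧ ReverseHolder n ((p/s)/((p/s) - 1)) w) ↔
      MuckenhouptA n (((p/s)/((p/s) - 1)) * (s/q - 1) + 1)
        (fun x => (w x) ^ ((p/s)/((p/s) - 1))) :=
  stmt4_general n p q s hq hqs hsp w hwm hw
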